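/- For all integers a₁, a₂, a₃, a₄ ≥ 2, setting D₁ = |[2*(a₄−1), a₃, a₁, 2*(a₂−1)]| and D₂ = |[2*(a₃−1), a₂, a₄, 2*(a₁−1)]|, one has the identity −(a₃a₄ + a₂ − a₄ + 1)·D₂ + (a₂a₃a₄ − a₂a₃ − a₃a₄ + a₄ − 2)·D₁ = (a₂a₃a₄ − a₃a₄ + a₄ − 1)·((a₁−1)(a₂−1)(a₃−1)(a₄−1) − a₁a₃ − a₂a₄ + 2). -/

import Mathlib

/-- Hirzebruch–Jung numerator: |[]| = 1, |[n]| = n,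
|[n₁, n₂, …]| = n₁·|[n₂, …]| − |[n₃, …]|. -/
def hj : List ℤ → ℤ
  | [] => 1
  | [n] => n
  | n :: m :: l => n * hj (m :: l) - hj l

/-! Prefixing `k` twos to a continuant acts on the recursion as
`|[2*k, x, …]| = (k + 1)·|[x, …]| − k·|[…]|`, so both numerators are explicit polynomials in
`a₁, …, a₄` once the lengths `aᵢ − 1` of the blocks of twos are known to be nonnegative, and the
identity becomes a polynomial identity. -/

theorem hj_cons_cons (n m : ℤ) (l : List ℤ) : hj (n :: m :: l) = n * hj (m :: l) - hj l := by
  rw [hj]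

theorem hj_replicate_two_append (x : ℤ) (l : List ℤ) :
    ∀ k : ℕ, hj (List.replicate k 2 ++ x :: l) = (k + 1) * hj (x :: l) - k * hj l
  | 0 => by simp
  | 1 => by simp [hj_cons_cons]
  | k + 2 => by
    have ih₁ := hj_replicate_two_append x l (k + 1)
    have ih₀ := hj_replicate_two_append x l k
    rw [List.replicate_succ, List.replicate_succ, List.cons_append, List.cons_append,
      hj_cons_cons, ← List.cons_append, ← List.replicate_succ, ih₁, ih₀]
    push_cast
    ring

theorem hj_replicate_two : ∀ k : ℕ, hj (List.replicate k 2) = k + 1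
  | 0 => rfl
  | k + 1 => by
    rw [List.replicate_succ', hj_replicate_two_append]
    simp only [hj]
    push_cast
    ring

theorem hj_cons_replicate_two (x : ℤ) : ∀ k : ℕ, hj (x :: List.replicate k 2) = x * (k + 1) - k
  | 0 => by simp [hj]
  | k + 1 => by
    rw [List.replicate_succ, hj_cons_cons, ← List.replicate_succ, hj_replicate_two,
      hj_replicate_two]
    push_cast
    ring

theorem hj_replicate_two_pair_replicate_two (x y : ℤ) (k m : ℕ) :
    hj (List.replicate k 2 ++ [x, y] ++ List.replicate m 2) =
      (k + 1) * (x * (y * (m + 1) - m) - (m + 1)) - k * (y * (m + 1) - m) := by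
  rw [List.append_assoc, List.cons_append, hj_replicate_two_append, List.cons_append,
    List.nil_append, hj_cons_cons, hj_cons_replicate_two, hj_replicate_two]

theorem numerator_identity (a₁ a₂ a₃ a₄ : ℤ) (h₁ : 2 ≤ a₁) (h₂ : 2 ≤ a₂) (h₃ : 2 ≤ a₃)
    (h₄ : 2 ≤ a₄)
    (D₁ D₂ : ℤ)
    (hD₁ : D₁ = hj (List.replicate (a₄ - 1).toNat 2 ++ [a₃, a₁] ++
      List.replicate (a₂ - 1).toNat 2))
    (hD₂ : D₂ = hj (List.replicate (a₃ - 1).toNat 2 ++ [a₂, a₄] ++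
      List.replicate (a₁ - 1).toNat 2)) :
    -(a₃ * a₄ + a₂ - a₄ + 1) * D₂ +
        (a₂ * a₃ * a₄ - a₂ * a₃ - a₃ * a₄ + a₄ - 2) * D₁ =
      (a₂ * a₃ * a₄ - a₃ * a₄ + a₄ - 1) *
        ((a₁ - 1) * (a₂ - 1) * (a₃ - 1) * (a₄ - 1) - a₁ * a₃ - a₂ * a₄ + 2) := by
  rw [hj_replicate_two_pair_replicate_two, Int.toNat_of_nonneg (by omega : 0 ≤ a₄ - 1),
    Int.toNat_of_nonneg (by omega : 0 ≤ a₂ - 1)] at hD₁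
  rw [hj_replicate_two_pair_replicate_two, Int.toNat_of_nonneg (by omega : 0 ≤ a₃ - 1),
    Int.toNat_of_nonneg (by omega : 0 ≤ a₁ - 1)] at hD₂
  subst hD₁ hD₂
  ring
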